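/- Let f : 𝔻 → 𝔻 be holomorphic, let τ ∈ ∂𝔻, and let ζ_1, …, ζ_n be distinct points of ∂𝔻 such that for each j = 1, …, n the radial limit f*(ζ_j) = lim_{r→1} f(rζ_j) exists and equals τ and the angular derivative f'(ζ_j) := ∠lim_{z→ζ_j}(f(z)−τ)/(z−ζ_j) exists finitely. Then Σ_{j=1}^n 1/|f'(ζ_j)| ≤ Re((τ+f(0))/(τ−f(0))). -/

import Mathlib

open Complex MeasureTheory Filter Topology Set
open scoped ENNReal NNReal

noncomputable section

/-- The open unit disc `𝔻 = {z ∈ ℂ : |z| < 1}`. -/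
def unitDisc : Set ℂ := {z : ℂ | ‖z‖ < 1}

/-- The Poisson kernel `P(ζ, z) = (1 - |z|²)/|z - ζ|²`. -/
def unitDiscPoissonKernel (ζ z : ℂ) : ℝ := (1 - ‖z‖ ^ 2) / ‖z - ζ‖ ^ 2

/-- `f` is a holomorphic self-map of the unit disc. -/
def IsHolSelfMap (f : ℂ → ℂ) : Prop :=
  DifferentiableOn ℂ f unitDisc ∧ MapsTo f unitDisc unitDisc

/-- `μ` is the Aleksandrov–Clark measure of `f` at `τ`: a finite positive Borel measure
concentrated on the unit circle such that
`Re((τ + f z)/(τ - f z)) = ∫ P(ζ, z) dμ(ζ)` for all `z ∈ 𝔻`. -/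
def IsClarkMeasure (f : ℂ → ℂ) (τ : ℂ) (μ : Measure ℂ) : Prop :=
  IsFiniteMeasure μ ∧ μ {z : ℂ | ‖z‖ ≠ 1} = 0 ∧
    ∀ z ∈ unitDisc, ((τ + f z) / (τ - f z)).re = ∫ ζ, unitDiscPoissonKernel ζ z ∂μ

/-- A continuous semigroup `(φ_t)_{t ≥ 0}` of holomorphic self-maps of the unit disc. -/
def IsCtsSemigroup (φ : ℝ → ℂ → ℂ) : Prop :=
  (∀ t : ℝ, 0 ≤ t → IsHolSelfMap (φ t)) ∧
  (∀ z ∈ unitDisc, φ 0 z = z) ∧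
  (∀ s t : ℝ, 0 ≤ s → 0 ≤ t → ∀ z ∈ unitDisc, φ (s + t) z = φ s (φ t z)) ∧
  ContinuousOn (fun p : ℝ × ℂ => φ p.1 p.2) (Ici (0 : ℝ) ×ˢ unitDisc)

/-- `G` is the infinitesimal generator of the semigroup `(φ_t)`:
`∂φ_t(z)/∂t = G(φ_t(z))` for all `z ∈ 𝔻`, `t ≥ 0`. -/
def IsInfGenerator (φ : ℝ → ℂ → ℂ) (G : ℂ → ℂ) : Prop :=
  DifferentiableOn ℂ G unitDisc ∧
  ∀ z ∈ unitDisc, ∀ t : ℝ, 0 ≤ t → HasDerivAt (fun s : ℝ => φ s z) (G (φ t z)) t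

/-- Stolz angle at `ζ` with opening `M`. -/
def stolzAngle (ζ : ℂ) (M : ℝ) : Set ℂ :=
  {z : ℂ | ‖z‖ < 1 ∧ ‖ζ - z‖ ≤ M * (1 - ‖z‖)}

/-- Nontangential (angular) limit: `g(z) → L` as `z → ζ` within every Stolz angle. -/
def NTLimit (g : ℂ → ℂ) (ζ L : ℂ) : Prop :=
  ∀ M : ℝ, 1 ≤ M → Tendsto g (𝓝[stolzAngle ζ M] ζ) (𝓝 L)

/-- Radial limit `f*(ζ) = lim_{r → 1⁻} f(rζ) = L`. -/
def RadialLimit (f : ℂ → ℂ) (ζ L : ℂ) : Prop :=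
  Tendsto (fun r : ℝ => f ((r : ℂ) * ζ)) (𝓝[<] (1 : ℝ)) (𝓝 L)

/-- `τ` is a boundary regular fixed point of `f` with (finite) angular derivative `d`. -/
def IsBRFP (f : ℂ → ℂ) (τ d : ℂ) : Prop :=
  RadialLimit f τ τ ∧ NTLimit (fun z => (f z - τ) / (z - τ)) τ d

/-- `τ` is a boundary regular fixed point of the semigroup `(φ_t)` with boundary dilatation
coefficients `(e^{λ t})`. -/
def HasBRFPWithCoeffs (φ : ℝ → ℂ → ℂ) (τ : ℂ) (lam : ℝ) : Prop :=
  ∀ t : ℝ, 0 ≤ t → IsBRFP (φ t) τ (Real.exp (lam * t))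

/-- Normalized arclength (Lebesgue) measure `m` on the unit circle, viewed as a measure on `ℂ`,
with `m(∂𝔻) = 1`. -/
def circleLebesgue : Measure ℂ :=
  ENNReal.ofReal (2 * Real.pi)⁻¹ •
    Measure.map (fun θ : ℝ => Complex.exp (θ * Complex.I))
      (volume.restrict (Ioc (0 : ℝ) (2 * Real.pi)))

end

namespace CP

lemma unitDisc_eq_ball : unitDisc = Metric.ball (0:ℂ) 1 := by
  ext z; simp [unitDisc, Metric.mem_ball, Complex.dist_eq]

lemma normSq_identity (a z : ℂ) :
    Complex.normSq (1 - (starRingEnd ℂ) a * z) - Complex.normSq (a - z)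
      = (1 - Complex.normSq a) * (1 - Complex.normSq z) := by
  simp only [Complex.normSq_apply, Complex.sub_re, Complex.sub_im, Complex.mul_re,
    Complex.mul_im, Complex.conj_re, Complex.conj_im, Complex.one_re, Complex.one_im]
  ring

lemma re_identity (A B : ℂ) :
    Complex.normSq (A + (starRingEnd ℂ) B) - Complex.normSq (A - B) = 4 * A.re * B.re := by
  simp only [Complex.normSq_apply, Complex.add_re, Complex.add_im, Complex.sub_re, Complex.sub_im,
    Complex.conj_re, Complex.conj_im]
  ring

lemma re_cayley {t z : ℂ} (ht : ‖t‖ = 1) (hz : ‖z‖ < 1) :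
    ((t + z)/(t - z)).re = (1 - ‖z‖^2) / ‖(z - t)‖^2 := by
  have h1 : Complex.normSq t = 1 := by rw [← Complex.sq_norm, ht]; norm_num
  have hne : t - z ≠ 0 := by
    intro h; rw [sub_eq_zero] at h; rw [← h, ht] at hz; linarith
  have hns : Complex.normSq (t - z) ≠ 0 := by simpa [Complex.normSq_eq_zero] using hne
  rw [Complex.div_re,
    show ‖(z - t)‖ ^ 2 = Complex.normSq (z - t) from Complex.sq_norm _,
    show ‖z‖ ^ 2 = Complex.normSq z from Complex.sq_norm _]
  have hcomm : Complex.normSq (z - t) = Complex.normSq (t - z) := by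
    simp only [Complex.normSq_apply, Complex.sub_re, Complex.sub_im]; ring
  rw [hcomm]
  field_simp
  simp only [Complex.normSq_apply, Complex.add_re, Complex.add_im, Complex.sub_re,
    Complex.sub_im] at h1 ⊢
  linear_combination h1

noncomputable def moeb (a z : ℂ) : ℂ := (a - z) / (1 - (starRingEnd ℂ) a * z)

lemma moeb_def (a z : ℂ) : moeb a z = (a - z) / (1 - (starRingEnd ℂ) a * z) := rfl

lemma one_sub_ne' {a z : ℂ} (ha : ‖a‖ < 1) (hz : ‖z‖ < 1) :
    1 - (starRingEnd ℂ) a * z ≠ 0 := by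
  intro hc
  rw [sub_eq_zero] at hc
  have h1 : (1:ℝ) = ‖a‖ * ‖z‖ := by
    have := congrArg (‖·‖) hc
    simpa [norm_mul] using this
  nlinarith [norm_nonneg a, norm_nonneg z]

lemma abs_one_sub_pos {a z : ℂ} (ha : ‖a‖ < 1) (hz : ‖z‖ < 1) :
    0 < ‖(1 - (starRingEnd ℂ) a * z)‖ :=
  norm_pos_iff.mpr (one_sub_ne' ha hz)

lemma moeb_sq_abs {a z : ℂ} (ha : ‖a‖ < 1) (hz : ‖z‖ < 1) :
    1 - ‖(moeb a z)‖ ^ 2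
      = (1 - ‖a‖ ^ 2) * (1 - ‖z‖ ^ 2)
          / ‖(1 - (starRingEnd ℂ) a * z)‖ ^ 2 := by
  have hD : (0:ℝ) < ‖(1 - (starRingEnd ℂ) a * z)‖ ^ 2 :=
    pow_pos (abs_one_sub_pos ha hz) 2
  rw [moeb_def, norm_div, div_pow]
  rw [eq_div_iff hD.ne', sub_mul, div_mul_cancel₀ _ hD.ne', one_mul]
  have := normSq_identity a z
  simp only [← Complex.sq_norm] at this
  linarith [this]

lemma moeb_mem {a z : ℂ} (ha : ‖a‖ < 1) (hz : ‖z‖ < 1) :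
    ‖(moeb a z)‖ < 1 := by
  have hD : (0:ℝ) < ‖(1 - (starRingEnd ℂ) a * z)‖ ^ 2 :=
    pow_pos (abs_one_sub_pos ha hz) 2
  have h := moeb_sq_abs ha hz
  have h2 : 0 < 1 - ‖(moeb a z)‖ ^ 2 := by
    rw [h]
    apply div_pos
    · apply mul_pos <;> nlinarith [norm_nonneg a, norm_nonneg z]
    · exact hD
  nlinarith [norm_nonneg (moeb a z)]

lemma moeb_moeb {a z : ℂ} (ha : ‖a‖ < 1) (hz : ‖z‖ < 1) :
    moeb a (moeb a z) = z := by
  have h1 : 1 - (starRingEnd ℂ) a * z ≠ 0 := one_sub_ne' ha hz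
  have h2 : 1 - (starRingEnd ℂ) a * moeb a z ≠ 0 := one_sub_ne' ha (moeb_mem ha hz)
  have h3 : 1 - (starRingEnd ℂ) a * a ≠ 0 := by
    intro hc
    rw [sub_eq_zero] at hc
    have h4 : (1:ℝ) = ‖a‖ * ‖a‖ := by
      have := congrArg (‖·‖) hc
      simpa [norm_mul] using this
    nlinarith [norm_nonneg a]
  have h3' : 1 - a * (starRingEnd ℂ) a ≠ 0 := by rw [mul_comm]; exact h3
  simp only [moeb_def] at h2 ⊢
  have e1 : a - (a - z) / (1 - (starRingEnd ℂ) a * z)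
      = z * (1 - (starRingEnd ℂ) a * a) / (1 - (starRingEnd ℂ) a * z) := by
    rw [eq_div_iff h1, sub_mul, div_mul_cancel₀ _ h1]; ring
  have e2 : 1 - (starRingEnd ℂ) a * ((a - z) / (1 - (starRingEnd ℂ) a * z))
      = (1 - (starRingEnd ℂ) a * a) / (1 - (starRingEnd ℂ) a * z) := by
    rw [eq_div_iff h1, sub_mul, mul_assoc, div_mul_cancel₀ _ h1]; ring
  rw [e1, e2, div_div_div_cancel_right₀ h1, mul_div_assoc, div_self h3, mul_one]

lemma moeb_diff {a : ℂ} (ha : ‖a‖ < 1) :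
    DifferentiableOn ℂ (moeb a) unitDisc := by
  apply DifferentiableOn.div
  · exact (differentiable_const a).differentiableOn.sub differentiableOn_id
  · exact (differentiable_const 1).differentiableOn.sub
      (differentiableOn_id.const_mul _)
  · exact fun z hz => one_sub_ne' ha hz

lemma moeb_zero (a : ℂ) : moeb a 0 = a := by simp [moeb_def]

lemma moeb_self {a : ℂ} : moeb a a = 0 := by simp [moeb_def]

lemma mem_disc {z : ℂ} : z ∈ unitDisc ↔ ‖z‖ < 1 := Iff.rfl

lemma moeb_mapsTo {a : ℂ} (ha : ‖a‖ < 1) :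
    Set.MapsTo (moeb a) unitDisc unitDisc := fun z hz => moeb_mem ha hz

lemma schwarz_pick {f : ℂ → ℂ} (hf : DifferentiableOn ℂ f unitDisc)
    (hm : Set.MapsTo f unitDisc unitDisc) {z w : ℂ}
    (hz : z ∈ unitDisc) (hw : w ∈ unitDisc) :
    ‖(moeb (f w) (f z))‖ ≤ ‖(moeb w z)‖ := by
  have hfw : ‖(f w)‖ < 1 := hm hw
  set g : ℂ → ℂ := fun x => moeb (f w) (f (moeb w x)) with hg
  have hgm : Set.MapsTo g unitDisc unitDisc := fun x hx =>
    moeb_mem hfw (hm (moeb_mem hw hx))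
  have hgd : DifferentiableOn ℂ g unitDisc := by
    apply DifferentiableOn.comp (moeb_diff hfw) _ (fun x hx => hm (moeb_mem hw hx))
    exact DifferentiableOn.comp hf (moeb_diff hw) (moeb_mapsTo hw)
  have hg0 : g 0 = 0 := by
    simp only [hg, moeb_zero, moeb_self]
  have key : ∀ x : ℂ, ‖x‖ < 1 → ‖(g x)‖ ≤ ‖x‖ := by
    intro x hx
    rw [unitDisc_eq_ball] at hgd hgm
    exact Complex.norm_le_norm_of_mapsTo_ball hgd (hgm.mono_right Metric.ball_subset_closedBall) hg0 hx
  have h1 := key (moeb w z) (moeb_mem hw hz)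
  rw [show g (moeb w z) = moeb (f w) (f z) from by
    simp only [hg]; rw [moeb_moeb hw hz]] at h1
  exact h1

/-- Schwarz–Pick, complement (Julia) form. -/
lemma schwarz_pick' {f : ℂ → ℂ} (hf : DifferentiableOn ℂ f unitDisc)
    (hm : Set.MapsTo f unitDisc unitDisc) {z w : ℂ}
    (hz : z ∈ unitDisc) (hw : w ∈ unitDisc) :
    (1 - ‖w‖ ^ 2) * (1 - ‖z‖ ^ 2)
        * ‖(1 - (starRingEnd ℂ) (f w) * f z)‖ ^ 2
      ≤ (1 - ‖(f w)‖ ^ 2) * (1 - ‖(f z)‖ ^ 2)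
        * ‖(1 - (starRingEnd ℂ) w * z)‖ ^ 2 := by
  have hfz : ‖(f z)‖ < 1 := hm hz
  have hfw : ‖(f w)‖ < 1 := hm hw
  have h := schwarz_pick hf hm hz hw
  have h2 : 1 - ‖(moeb w z)‖ ^ 2 ≤ 1 - ‖(moeb (f w) (f z))‖ ^ 2 := by
    have := norm_nonneg (moeb (f w) (f z))
    nlinarith
  rw [moeb_sq_abs hw hz, moeb_sq_abs hfw hfz] at h2
  rw [div_le_div_iff₀ (pow_pos (abs_one_sub_pos hw hz) 2)
    (pow_pos (abs_one_sub_pos hfw hfz) 2)] at h2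
  linarith

lemma harnack_pos {F : ℂ → ℂ} (hF : DifferentiableOn ℂ F unitDisc)
    (hpos : ∀ x ∈ unitDisc, 0 < (F x).re) {z w : ℂ}
    (hz : z ∈ unitDisc) (hw : w ∈ unitDisc) :
    (F w).re * ((1 - ‖w‖ ^ 2) * (1 - ‖z‖ ^ 2))
      ≤ (F z).re * (4 * ‖(1 - (starRingEnd ℂ) w * z)‖ ^ 2) := by
  set B := F w with hB
  have hbpos : 0 < B.re := hpos w hw
  have hden : ∀ x ∈ unitDisc, F x + (starRingEnd ℂ) B ≠ 0 := by
    intro x hx hc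
    have : (F x + (starRingEnd ℂ) B).re = (F x).re + B.re := by
      simp [Complex.add_re, Complex.conj_re]
    rw [hc] at this
    simp at this
    have := hpos x hx
    linarith
  set h : ℂ → ℂ := fun x => (F x - B) / (F x + (starRingEnd ℂ) B) with hh
  have habs : ∀ x ∈ unitDisc, ‖(h x)‖ < 1 := by
    intro x hx
    have hid := re_identity (F x) B
    have hA := hpos x hx
    have hd := hden x hx
    have hdpos : 0 < Complex.normSq (F x + (starRingEnd ℂ) B) :=
      Complex.normSq_pos.mpr hd
    have hlt : Complex.normSq (F x - B) < Complex.normSq (F x + (starRingEnd ℂ) B) := by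
      nlinarith
    simp only [hh]
    rw [norm_div, div_lt_one (norm_pos_iff.mpr hd)]
    have := Complex.sq_norm (F x - B)
    have := Complex.sq_norm (F x + (starRingEnd ℂ) B)
    nlinarith [norm_nonneg (F x - B), norm_nonneg (F x + (starRingEnd ℂ) B)]
  have hmaps : Set.MapsTo h unitDisc unitDisc := fun x hx => habs x hx
  have hdiff : DifferentiableOn ℂ h unitDisc :=
    (hF.sub (differentiableOn_const _)).div (hF.add (differentiableOn_const _)) hden
  have hw0 : h w = 0 := by simp [hh, hB]
  have hsp := schwarz_pick' hdiff hmaps hz hw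
  rw [hw0] at hsp
  simp only [map_zero, norm_zero, mul_zero, zero_mul, sub_zero, map_one, norm_one, one_pow, mul_one] at hsp
  -- hsp : (1-|w|²)(1-|z|²) * 1 ≤ (1-0)(1-|h z|²) * |1-w̄z|²
  have hid := re_identity (F z) B
  have hA := hpos z hz
  have hd := hden z hz
  have hdpos : 0 < Complex.normSq (F z + (starRingEnd ℂ) B) := Complex.normSq_pos.mpr hd
  have hz2 : 1 - ‖(h z)‖ ^ 2
      = 4 * (F z).re * B.re / Complex.normSq (F z + (starRingEnd ℂ) B) := by
    simp only [hh]
    rw [norm_div, div_pow, Complex.sq_norm, Complex.sq_norm]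
    rw [eq_div_iff hdpos.ne', sub_mul, div_mul_cancel₀ _ hdpos.ne', one_mul]
    linarith
  have hre : (F z + (starRingEnd ℂ) B).re = (F z).re + B.re := by
    simp [Complex.add_re, Complex.conj_re]
  have hnormge : B.re ^ 2 ≤ Complex.normSq (F z + (starRingEnd ℂ) B) := by
    rw [Complex.normSq_apply]
    nlinarith [(F z).re, sq_nonneg ((F z + (starRingEnd ℂ) B).im), hre]
  have hX : (0:ℝ) ≤ ‖(1 - (starRingEnd ℂ) w * z)‖ ^ 2 := sq_nonneg _
  rw [hz2] at hsp
  rw [show ((1:ℝ) - 0 ^ 2) = 1 from by norm_num, one_mul,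
    div_mul_eq_mul_div, le_div_iff₀ hdpos] at hsp
  nlinarith [mul_le_mul_of_nonneg_left hsp hbpos.le,
    mul_le_mul_of_nonneg_left hnormge (by positivity : (0:ℝ) ≤ 4 * (F z).re
      * ‖(1 - (starRingEnd ℂ) w * z)‖ ^ 2), hdpos, mul_pos hA hbpos]

lemma harnack {F : ℂ → ℂ} (hF : DifferentiableOn ℂ F unitDisc)
    (hnn : ∀ x ∈ unitDisc, 0 ≤ (F x).re) {z w : ℂ}
    (hz : z ∈ unitDisc) (hw : w ∈ unitDisc) :
    (F w).re * ((1 - ‖w‖ ^ 2) * (1 - ‖z‖ ^ 2))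
      ≤ (F z).re * (4 * ‖(1 - (starRingEnd ℂ) w * z)‖ ^ 2) := by
  set K : ℝ := (1 - ‖w‖ ^ 2) * (1 - ‖z‖ ^ 2) with hK
  set X : ℝ := 4 * ‖(1 - (starRingEnd ℂ) w * z)‖ ^ 2 with hX
  have hK0 : 0 ≤ K := by
    apply mul_nonneg <;> nlinarith [norm_nonneg w, norm_nonneg z,
      mem_disc.mp hz, mem_disc.mp hw]
  have hX0 : 0 ≤ X := by positivity
  have key : ∀ ε : ℝ, 0 < ε → ((F w).re + ε) * K ≤ ((F z).re + ε) * X := by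
    intro ε hε
    have hFd : DifferentiableOn ℂ (fun x => F x + (ε:ℂ)) unitDisc :=
      hF.add (differentiableOn_const _)
    have hFp : ∀ x ∈ unitDisc, 0 < ((fun x => F x + (ε:ℂ)) x).re := by
      intro x hx
      have := hnn x hx
      simp only [Complex.add_re, Complex.ofReal_re]
      linarith
    have := harnack_pos hFd hFp hz hw
    simpa only [Complex.add_re, Complex.ofReal_re] using this
  apply le_of_forall_pos_le_add
  intro δ hδ
  have hε : 0 < δ / (X + 1) := by positivity
  have h1 := key _ hε
  have hXle : (δ / (X + 1)) * X ≤ δ := by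
    rw [div_mul_eq_mul_div, div_le_iff₀ (by linarith : (0:ℝ) < X + 1)]
    nlinarith
  nlinarith [mul_nonneg (le_of_lt hε) hK0]

lemma abs_one_sub_conj {ζ z : ℂ} (hζ : ‖ζ‖ = 1) :
    ‖(1 - (starRingEnd ℂ) ζ * z)‖ = ‖(ζ - z)‖ := by
  have h1 : (starRingEnd ℂ) ζ * ζ = 1 := by
    rw [mul_comm, Complex.mul_conj]
    norm_cast
    rw [← Complex.sq_norm, hζ]; norm_num
  have : 1 - (starRingEnd ℂ) ζ * z = (starRingEnd ℂ) ζ * (ζ - z) := by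
    rw [mul_sub, h1]
  rw [this, norm_mul, Complex.norm_conj, hζ, one_mul]

lemma juliaA {F : ℂ → ℂ} (hF : DifferentiableOn ℂ F unitDisc)
    (hnn : ∀ x ∈ unitDisc, 0 ≤ (F x).re) {ζ : ℂ} (hζ : ‖ζ‖ = 1) {c : ℝ}
    (hfreq : ∀ ε : ℝ, 0 < ε →
      ∃ᶠ r : ℝ in 𝓝[<] (1:ℝ), 4*c - ε ≤ (1 - r^2) * (F ((r:ℂ)*ζ)).re)
    {z : ℂ} (hz : z ∈ unitDisc) :
    c * unitDiscPoissonKernel ζ z ≤ (F z).re := by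
  have hz1 : ‖z‖ < 1 := hz
  have hz2 : 0 < 1 - ‖z‖ ^ 2 := by
    nlinarith [norm_nonneg z]
  have hzζ : z - ζ ≠ 0 := by
    intro h; rw [sub_eq_zero] at h; rw [h, hζ] at hz1; linarith
  have hK : 0 < ‖(z - ζ)‖ ^ 2 := pow_pos (norm_pos_iff.mpr hzζ) 2
  set a : ℝ := (F z).re with ha
  have ha0 : 0 ≤ a := hnn z hz
  have step : ∀ ε : ℝ, 0 < ε →
      (4*c - ε) * (1 - ‖z‖ ^ 2) ≤ 4 * a * ‖(z - ζ)‖ ^ 2 := by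
    intro ε hε
    apply le_of_forall_pos_le_add
    intro δ hδ
    have htend : Tendsto (fun r : ℝ => a * (4 * 
        ‖(1 - (starRingEnd ℂ) ((r:ℂ)*ζ) * z)‖ ^ 2)) (𝓝[<] (1:ℝ))
        (𝓝 (a * (4 * ‖(1 - (starRingEnd ℂ) ζ * z)‖ ^ 2))) := by
      have hcont : Continuous (fun r : ℝ => a * (4 * 
          ‖(1 - (starRingEnd ℂ) ((r:ℂ)*ζ) * z)‖ ^ 2)) := by
        apply continuous_const.mul
        apply continuous_const.mul
        apply Continuous.pow
        apply continuous_norm.comp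
        exact continuous_const.sub
          (((Complex.continuous_conj.comp
            ((Complex.continuous_ofReal).mul continuous_const))).mul continuous_const)
      have := hcont.tendsto (1:ℝ)
      simp only [Complex.ofReal_one, one_mul] at this
      exact this.mono_left nhdsWithin_le_nhds
    have hev : ∀ᶠ r : ℝ in 𝓝[<] (1:ℝ), a * (4 * 
        ‖(1 - (starRingEnd ℂ) ((r:ℂ)*ζ) * z)‖ ^ 2)
          < a * (4 * ‖(1 - (starRingEnd ℂ) ζ * z)‖ ^ 2) + δ :=
      htend.eventually_lt_const
        (show a * (4 * ‖(1 - (starRingEnd ℂ) ζ * z)‖ ^ 2)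
          < a * (4 * ‖(1 - (starRingEnd ℂ) ζ * z)‖ ^ 2) + δ by linarith)
    have hIoo : Ioo (0:ℝ) 1 ∈ 𝓝[<] (1:ℝ) :=
      Ioo_mem_nhdsLT_of_mem (by constructor <;> norm_num)
    obtain ⟨r, hP, hglt, hr0, hr1⟩ :=
      ((hfreq ε hε).and_eventually (hev.and (eventually_of_mem hIoo fun r hr => hr))).exists
    have habsw : ‖((r:ℂ)*ζ)‖ = r := by
      rw [norm_mul, Complex.norm_real, Real.norm_eq_abs, hζ, mul_one, abs_of_pos hr0]
    have hw : ((r:ℂ)*ζ) ∈ unitDisc := by rw [mem_disc, habsw]; exact hr1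
    have hhar := harnack hF hnn hz hw
    rw [habsw] at hhar
    calc (4*c - ε) * (1 - ‖z‖ ^ 2)
        ≤ ((1 - r^2) * (F ((r:ℂ)*ζ)).re) * (1 - ‖z‖ ^ 2) := by
          apply mul_le_mul_of_nonneg_right hP hz2.le
      _ = (F ((r:ℂ)*ζ)).re * ((1 - r^2) * (1 - ‖z‖ ^ 2)) := by ring
      _ ≤ a * (4 * ‖(1 - (starRingEnd ℂ) ((r:ℂ)*ζ) * z)‖ ^ 2) := hhar
      _ ≤ a * (4 * ‖(1 - (starRingEnd ℂ) ζ * z)‖ ^ 2) + δ := hglt.le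
      _ = 4 * a * ‖(z - ζ)‖ ^ 2 + δ := by
          rw [abs_one_sub_conj hζ, norm_sub_rev ζ z]; ring
  have main : 4*c * (1 - ‖z‖ ^ 2) ≤ 4 * a * ‖(z - ζ)‖ ^ 2 := by
    apply le_of_forall_pos_le_add
    intro δ hδ
    have hε : 0 < δ / (1 - ‖z‖ ^ 2) := by positivity
    have := step _ hε
    have heq : (4*c - δ / (1 - ‖z‖ ^ 2)) * (1 - ‖z‖ ^ 2)
        = 4*c*(1 - ‖z‖ ^ 2) - δ := by
      field_simp
    linarith [heq ▸ this]
  rw [unitDiscPoissonKernel, mul_div_assoc', div_le_iff₀ hK]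
  nlinarith [main]

lemma radial_tendsto {ζ : ℂ} (hζ : ‖ζ‖ = 1) :
    Tendsto (fun r : ℝ => (r:ℂ) * ζ) (𝓝[<] (1:ℝ)) (𝓝[stolzAngle ζ 1] ζ) := by
  rw [tendsto_nhdsWithin_iff]
  constructor
  · have hcont : Continuous fun r : ℝ => (r:ℂ) * ζ :=
      Complex.continuous_ofReal.mul continuous_const
    have := hcont.tendsto (1:ℝ)
    simp only [Complex.ofReal_one, one_mul] at this
    exact this.mono_left nhdsWithin_le_nhds
  · filter_upwards [Ioo_mem_nhdsLT_of_mem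
      (show (1:ℝ) ∈ Ioc (0:ℝ) 1 by constructor <;> norm_num)] with r hr
    have habs : ‖((r:ℂ) * ζ)‖ = r := by
      rw [norm_mul, Complex.norm_real, Real.norm_eq_abs, hζ, mul_one, abs_of_pos hr.1]
    refine ⟨by rw [habs]; exact hr.2, ?_⟩
    have : ζ - (r:ℂ) * ζ = ((1:ℝ) - r : ℝ) * ζ := by push_cast; ring
    rw [habs, this, norm_mul, Complex.norm_real, Real.norm_eq_abs, hζ, mul_one,
      _root_.abs_of_nonneg (by linarith [hr.2] : (0:ℝ) ≤ 1 - r), one_mul]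

lemma sub_radial_ne {ζ : ℂ} (hζ : ‖ζ‖ = 1) {r : ℝ} (hr : r ∈ Ioo (0:ℝ) 1) :
    (r:ℂ) * ζ - ζ ≠ 0 := by
  intro h
  have : ‖((r:ℂ) * ζ)‖ = ‖ζ‖ := by
    rw [sub_eq_zero] at h; rw [h]
  rw [norm_mul, Complex.norm_real, Real.norm_eq_abs, hζ, mul_one, abs_of_pos hr.1] at this
  exact absurd this (by linarith [hr.2])

lemma abs_radial_sub {ζ : ℂ} (hζ : ‖ζ‖ = 1) {r : ℝ} (hr : r ∈ Ioo (0:ℝ) 1) :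
    ‖((r:ℂ) * ζ - ζ)‖ = 1 - r := by
  have : (r:ℂ) * ζ - ζ = ((r - 1 : ℝ) : ℂ) * ζ := by push_cast; ring
  rw [this, norm_mul, Complex.norm_real, Real.norm_eq_abs, hζ, mul_one, abs_of_neg (by linarith [hr.2]),
    neg_sub]

lemma julia_f {f : ℂ → ℂ} (hfd : DifferentiableOn ℂ f unitDisc)
    (hfm : Set.MapsTo f unitDisc unitDisc) {τ ζ d : ℂ}
    (hτ : ‖τ‖ = 1) (hζ : ‖ζ‖ = 1)
    (hang : Tendsto (fun x => (f x - τ)/(x - ζ)) (𝓝[stolzAngle ζ 1] ζ) (𝓝 d))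
    {z : ℂ} (hz : z ∈ unitDisc) :
    1 / ‖d‖ * unitDiscPoissonKernel ζ z ≤ ((τ + f z)/(τ - f z)).re := by
  have hfz : ‖(f z)‖ < 1 := hfm hz
  have hfz2 : 0 < 1 - ‖(f z)‖ ^ 2 := by nlinarith [norm_nonneg (f z)]
  have hz1 : ‖z‖ < 1 := hz
  have hz2 : 0 < 1 - ‖z‖ ^ 2 := by nlinarith [norm_nonneg z]
  have hτfz : f z - τ ≠ 0 := by
    intro h; rw [sub_eq_zero] at h; rw [h, hτ] at hfz; linarith
  have hfτK : 0 < ‖(f z - τ)‖ ^ 2 := pow_pos (norm_pos_iff.mpr hτfz) 2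
  have hzζ : z - ζ ≠ 0 := by
    intro h; rw [sub_eq_zero] at h; rw [h, hζ] at hz1; linarith
  have hK : 0 < ‖(z - ζ)‖ ^ 2 := pow_pos (norm_pos_iff.mpr hzζ) 2
  rw [re_cayley hτ hfz, unitDiscPoissonKernel]
  rcases eq_or_ne d 0 with rfl | hd
  · rw [norm_zero]
    simp only [div_zero, zero_mul]
    apply div_nonneg _ hfτK.le
    nlinarith [norm_nonneg (f z)]
  have hd0 : 0 < ‖d‖ := norm_pos_iff.mpr hd
  -- radial limit of the difference quotient
  set q : ℝ → ℂ := fun r => (f ((r:ℂ) * ζ) - τ) / ((r:ℂ) * ζ - ζ) with hq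
  have hrad : Tendsto q (𝓝[<] (1:ℝ)) (𝓝 d) := hang.comp (radial_tendsto hζ)
  have hIoo : Ioo (0:ℝ) 1 ∈ 𝓝[<] (1:ℝ) :=
    Ioo_mem_nhdsLT_of_mem (by constructor <;> norm_num)
  have hsub0 : Tendsto (fun r : ℝ => (r:ℂ) * ζ - ζ) (𝓝[<] (1:ℝ)) (𝓝 0) := by
    have hcont : Continuous fun r : ℝ => (r:ℂ) * ζ - ζ :=
      (Complex.continuous_ofReal.mul continuous_const).sub continuous_const
    have := hcont.tendsto (1:ℝ)
    simp only [Complex.ofReal_one, one_mul, sub_self] at this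
    exact this.mono_left nhdsWithin_le_nhds
  have hfτ : Tendsto (fun r : ℝ => f ((r:ℂ) * ζ)) (𝓝[<] (1:ℝ)) (𝓝 τ) := by
    have h1 : Tendsto (fun r : ℝ => q r * ((r:ℂ) * ζ - ζ) + τ) (𝓝[<] (1:ℝ))
        (𝓝 (d * 0 + τ)) := (hrad.mul hsub0).add tendsto_const_nhds
    rw [mul_zero, zero_add] at h1
    apply h1.congr'
    filter_upwards [hIoo] with r hr
    rw [hq]
    show (f ((r:ℂ) * ζ) - τ) / ((r:ℂ) * ζ - ζ) * ((r:ℂ) * ζ - ζ) + τ = f ((r:ℂ) * ζ)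
    rw [div_mul_cancel₀ _ (sub_radial_ne hζ hr)]; ring
  -- the key eventual inequality
  have hev : ∀ᶠ r : ℝ in 𝓝[<] (1:ℝ),
      (1 + r) * ((1 - ‖z‖ ^ 2)
          * ‖(1 - (starRingEnd ℂ) (f ((r:ℂ) * ζ)) * f z)‖ ^ 2)
        ≤ 2 * ‖(q r)‖ * ((1 - ‖(f z)‖ ^ 2)
          * ‖(1 - (starRingEnd ℂ) ((r:ℂ) * ζ) * z)‖ ^ 2) := by
    filter_upwards [hIoo] with r hr
    have hw : (r:ℂ) * ζ ∈ unitDisc := by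
      rw [mem_disc, norm_mul, Complex.norm_real, Real.norm_eq_abs, hζ, mul_one, abs_of_pos hr.1]
      exact hr.2
    have habsw : ‖((r:ℂ) * ζ)‖ = r := by
      rw [norm_mul, Complex.norm_real, Real.norm_eq_abs, hζ, mul_one, abs_of_pos hr.1]
    have hsp := schwarz_pick' hfd hfm hz hw
    rw [habsw] at hsp
    have hfw : ‖(f ((r:ℂ) * ζ))‖ < 1 := hfm hw
    have hbound : 1 - ‖(f ((r:ℂ) * ζ))‖ ^ 2
        ≤ 2 * ‖(q r)‖ * (1 - r) := by
      have h1 : 1 - ‖(f ((r:ℂ) * ζ))‖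
          ≤ ‖(τ - f ((r:ℂ) * ζ))‖ := by
        have := norm_add_le (τ - f ((r:ℂ) * ζ)) (f ((r:ℂ) * ζ))
        simp only [sub_add_cancel] at this
        rw [hτ] at this
        linarith
      have h2 : ‖(τ - f ((r:ℂ) * ζ))‖ = ‖(q r)‖ * (1 - r) := by
        rw [norm_sub_rev, hq]
        have : f ((r:ℂ) * ζ) - τ = ((f ((r:ℂ) * ζ) - τ) / ((r:ℂ) * ζ - ζ))
            * ((r:ℂ) * ζ - ζ) := by
          rw [div_mul_cancel₀ _ (sub_radial_ne hζ hr)]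
        rw [this, norm_mul, abs_radial_sub hζ hr]
      nlinarith [norm_nonneg (f ((r:ℂ) * ζ))]
    have h1r : 0 < 1 - r := by linarith [hr.2]
    have hQ : (0:ℝ) ≤ (1 - ‖z‖ ^ 2)
        * ‖(1 - (starRingEnd ℂ) (f ((r:ℂ) * ζ)) * f z)‖ ^ 2 := by
      apply mul_nonneg hz2.le (sq_nonneg _)
    have hR : (0:ℝ) ≤ (1 - ‖(f z)‖ ^ 2)
        * ‖(1 - (starRingEnd ℂ) ((r:ℂ) * ζ) * z)‖ ^ 2 := by
      apply mul_nonneg hfz2.le (sq_nonneg _)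
    -- hsp : (1-r²)(1-|z|²)Q ≤ (1-|fw|²)(1-|fz|²)R
    have hchain : (1 - r^2) * ((1 - ‖z‖ ^ 2)
          * ‖(1 - (starRingEnd ℂ) (f ((r:ℂ) * ζ)) * f z)‖ ^ 2)
        ≤ (2 * ‖(q r)‖ * (1 - r)) * ((1 - ‖(f z)‖ ^ 2)
          * ‖(1 - (starRingEnd ℂ) ((r:ℂ) * ζ) * z)‖ ^ 2) := by
      calc (1 - r^2) * ((1 - ‖z‖ ^ 2)
            * ‖(1 - (starRingEnd ℂ) (f ((r:ℂ) * ζ)) * f z)‖ ^ 2)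
          ≤ (1 - ‖(f ((r:ℂ) * ζ))‖ ^ 2) * ((1 - ‖(f z)‖ ^ 2)
            * ‖(1 - (starRingEnd ℂ) ((r:ℂ) * ζ) * z)‖ ^ 2) := by
            nlinarith [hsp]
        _ ≤ (2 * ‖(q r)‖ * (1 - r)) * ((1 - ‖(f z)‖ ^ 2)
            * ‖(1 - (starRingEnd ℂ) ((r:ℂ) * ζ) * z)‖ ^ 2) :=
            mul_le_mul_of_nonneg_right hbound hR
    have heq : (1 - r^2) = (1 - r) * (1 + r) := by ring
    rw [heq] at hchain
    have := (mul_le_mul_iff_right₀ h1r).mp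
      (by linarith [hchain] :
        (1 - r) * ((1 + r) * ((1 - ‖z‖ ^ 2)
          * ‖(1 - (starRingEnd ℂ) (f ((r:ℂ) * ζ)) * f z)‖ ^ 2))
        ≤ (1 - r) * (2 * ‖(q r)‖ * ((1 - ‖(f z)‖ ^ 2)
          * ‖(1 - (starRingEnd ℂ) ((r:ℂ) * ζ) * z)‖ ^ 2)))
    exact this
  -- limits of both sides
  have htL : Tendsto (fun r : ℝ => (1 + r) * ((1 - ‖z‖ ^ 2)
      * ‖(1 - (starRingEnd ℂ) (f ((r:ℂ) * ζ)) * f z)‖ ^ 2)) (𝓝[<] (1:ℝ))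
      (𝓝 (2 * ((1 - ‖z‖ ^ 2) * ‖(f z - τ)‖ ^ 2))) := by
    have h1 : Tendsto (fun r : ℝ => (1:ℝ) + r) (𝓝[<] (1:ℝ)) (𝓝 2) := by
      have hcont : Continuous fun r : ℝ => (1:ℝ) + r := by continuity
      have := hcont.tendsto (1:ℝ)
      norm_num at this
      exact this.mono_left nhdsWithin_le_nhds
    have h2 : Tendsto (fun r : ℝ => 
        ‖(1 - (starRingEnd ℂ) (f ((r:ℂ) * ζ)) * f z)‖ ^ 2) (𝓝[<] (1:ℝ))
        (𝓝 (‖(1 - (starRingEnd ℂ) τ * f z)‖ ^ 2)) := by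
      apply Tendsto.pow
      apply (continuous_norm.tendsto _).comp
      exact tendsto_const_nhds.sub
        (((Complex.continuous_conj.tendsto τ).comp hfτ).mul tendsto_const_nhds)
    have h3 := h1.mul (Tendsto.const_mul (1 - ‖z‖ ^ 2) h2)
    have habseq : ‖(1 - (starRingEnd ℂ) τ * f z)‖ = ‖(f z - τ)‖ := by
      rw [abs_one_sub_conj hτ, norm_sub_rev]
    rw [habseq] at h3
    exact h3
  have htR : Tendsto (fun r : ℝ => 2 * ‖(q r)‖
      * ((1 - ‖(f z)‖ ^ 2)
        * ‖(1 - (starRingEnd ℂ) ((r:ℂ) * ζ) * z)‖ ^ 2)) (𝓝[<] (1:ℝ))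
      (𝓝 (2 * ‖d‖ * ((1 - ‖(f z)‖ ^ 2)
        * ‖(ζ - z)‖ ^ 2))) := by
    have h1 : Tendsto (fun r : ℝ => 2 * ‖(q r)‖) (𝓝[<] (1:ℝ))
        (𝓝 (2 * ‖d‖)) :=
      Tendsto.const_mul 2 ((continuous_norm.tendsto d).comp hrad)
    have h2 : Tendsto (fun r : ℝ => ‖(1 - (starRingEnd ℂ) ((r:ℂ) * ζ) * z)‖ ^ 2)
        (𝓝[<] (1:ℝ)) (𝓝 (‖(1 - (starRingEnd ℂ) ζ * z)‖ ^ 2)) := by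
      apply Tendsto.pow
      apply (continuous_norm.tendsto _).comp
      have hcont : Continuous fun r : ℝ => 1 - (starRingEnd ℂ) ((r:ℂ) * ζ) * z :=
        continuous_const.sub ((Complex.continuous_conj.comp
          (Complex.continuous_ofReal.mul continuous_const)).mul continuous_const)
      have := hcont.tendsto (1:ℝ)
      simp only [Complex.ofReal_one, one_mul] at this
      exact this.mono_left nhdsWithin_le_nhds
    rw [abs_one_sub_conj hζ] at h2
    exact h1.mul (Tendsto.const_mul (1 - ‖(f z)‖ ^ 2) h2)
  have key := le_of_tendsto_of_tendsto htL htR hev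
  -- key : 2(1-|z|²)|fz-τ|² ≤ 2|d|(1-|fz|²)|ζ-z|²
  rw [div_mul_div_comm, one_mul, div_le_div_iff₀ (by positivity) hfτK]
  have habs2 : ‖(ζ - z)‖ = ‖(z - ζ)‖ := norm_sub_rev ζ z
  rw [habs2] at key
  nlinarith [key]

end CP

set_option maxHeartbeats 1600000

/-- the Cowen–Pommerenke type inequality
`Σ 1/|f'(ζ_j)| ≤ Re((τ + f(0))/(τ − f(0)))`. -/
theorem statement11
    (f : ℂ → ℂ) (hf : IsHolSelfMap f)
    (τ : ℂ) (hτ : ‖τ‖ = 1)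
    (n : ℕ) (ζ : Fin n → ℂ) (hdist : Function.Injective ζ)
    (hcirc : ∀ j, ‖(ζ j)‖ = 1)
    (hrad : ∀ j, RadialLimit f (ζ j) τ)
    (d : Fin n → ℂ)
    (hang : ∀ j, NTLimit (fun z => (f z - τ) / (z - ζ j)) (ζ j) (d j)) :
    (∑ j : Fin n, 1 / ‖(d j)‖) ≤ ((τ + f 0) / (τ - f 0)).re := by
  obtain ⟨hfd, hfm⟩ := hf
  set c : Fin n → ℝ := fun j => 1 / ‖(d j)‖ with hc
  have hc0 : ∀ j, 0 ≤ c j := fun j => by positivity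
  set F : ℂ → ℂ := fun x => (τ + f x) / (τ - f x) with hF
  have hFne : ∀ x ∈ unitDisc, τ - f x ≠ 0 := by
    intro x hx h
    rw [sub_eq_zero] at h
    have h2 : ‖(f x)‖ < 1 := hfm hx
    rw [← h, hτ] at h2
    exact lt_irrefl _ h2
  have hFd : DifferentiableOn ℂ F unitDisc :=
    ((differentiableOn_const τ).add hfd).div ((differentiableOn_const τ).sub hfd) hFne
  have hjulia : ∀ (j : Fin n), ∀ z ∈ unitDisc,
      c j * unitDiscPoissonKernel (ζ j) z ≤ (F z).re := by
    intro j z hz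
    exact CP.julia_f hfd hfm hτ (hcirc j) (hang j 1 le_rfl) hz
  set H : Fin n → ℂ → ℂ := fun j x => (ζ j + x) / (ζ j - x) with hH
  have hHne : ∀ j, ∀ x ∈ unitDisc, ζ j - x ≠ 0 := by
    intro j x hx h
    rw [sub_eq_zero] at h
    have h2 : ‖x‖ < 1 := hx
    rw [← h, hcirc j] at h2
    exact lt_irrefl _ h2
  have hHd : ∀ j, DifferentiableOn ℂ (H j) unitDisc := fun j =>
    ((differentiableOn_const _).add differentiableOn_id).div
      ((differentiableOn_const _).sub differentiableOn_id) (hHne j)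
  have hHre : ∀ j, ∀ x ∈ unitDisc, (H j x).re = unitDiscPoissonKernel (ζ j) x := by
    intro j x hx
    exact CP.re_cayley (hcirc j) hx
  have hFre : ∀ x ∈ unitDisc, 0 ≤ (F x).re := by
    intro x hx
    rw [hF]
    rw [CP.re_cayley hτ (hfm hx)]
    have h2 : ‖(f x)‖ < 1 := hfm hx
    apply div_nonneg _ (sq_nonneg _)
    nlinarith [norm_nonneg (f x)]
  have hIoo : Ioo (0:ℝ) 1 ∈ 𝓝[<] (1:ℝ) :=
    Ioo_mem_nhdsLT_of_mem (by constructor <;> norm_num)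
  have main : ∀ S : Finset (Fin n), ∀ z ∈ unitDisc,
      (∑ j ∈ S, c j * unitDiscPoissonKernel (ζ j) z) ≤ (F z).re := by
    intro S
    induction S using Finset.induction_on with
    | empty =>
      intro z hz
      rw [Finset.sum_empty]
      exact hFre z hz
    | @insert k S hk IH =>
      intro z hz
      set G : ℂ → ℂ := fun x => F x - ∑ j ∈ S, ((c j : ℂ) * H j x) with hG
      have hGd : DifferentiableOn ℂ G unitDisc :=
        hFd.sub (DifferentiableOn.fun_sum fun j _ => ((hHd j).const_mul _))
      have hGre : ∀ x ∈ unitDisc,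
          (G x).re = (F x).re - ∑ j ∈ S, c j * unitDiscPoissonKernel (ζ j) x := by
        intro x hx
        rw [hG]
        simp only [Complex.sub_re]
        congr 1
        rw [Complex.re_sum]
        apply Finset.sum_congr rfl
        intro j _
        rw [Complex.re_ofReal_mul, hHre j x hx]
      have hGnn : ∀ x ∈ unitDisc, 0 ≤ (G x).re := by
        intro x hx
        rw [hGre x hx]
        have := IH x hx
        linarith
      have hfreq : ∀ ε : ℝ, 0 < ε → ∃ᶠ r : ℝ in 𝓝[<] (1:ℝ),
          4 * c k - ε ≤ (1 - r^2) * (G ((r:ℂ) * ζ k)).re := by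
        intro ε hε
        apply Filter.Eventually.frequently
        set φ : ℝ → ℝ := fun r => c k * (1+r)^2 - ∑ j ∈ S, c j *
            ((1 - r^2)^2 / ‖((r:ℂ) * ζ k - ζ j)‖^2) with hφ
        have hL : Tendsto φ (𝓝[<] (1:ℝ)) (𝓝 (4 * c k)) := by
          have h1 : Tendsto (fun r : ℝ => c k * (1+r)^2) (𝓝[<] (1:ℝ))
              (𝓝 (c k * (1+1)^2)) := by
            have hcont : Continuous fun r : ℝ => c k * (1+r)^2 := by continuity
            exact (hcont.tendsto 1).mono_left nhdsWithin_le_nhds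
          have h2 : Tendsto (fun r : ℝ => ∑ j ∈ S, c j *
              ((1 - r^2)^2 / ‖((r:ℂ) * ζ k - ζ j)‖^2)) (𝓝[<] (1:ℝ))
              (𝓝 (∑ j ∈ S, (0:ℝ))) := by
            apply tendsto_finset_sum
            intro j hj
            have hjk : ζ k - ζ j ≠ 0 := by
              rw [sub_ne_zero]
              intro hcontra
              rw [← hdist hcontra] at hj
              exact hk hj
            have hden : Tendsto (fun r : ℝ => ‖((r:ℂ) * ζ k - ζ j)‖^2)
                (𝓝[<] (1:ℝ)) (𝓝 (‖(ζ k - ζ j)‖^2)) := by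
              have hcont : Continuous fun r : ℝ =>
                  ‖((r:ℂ) * ζ k - ζ j)‖^2 := by
                apply Continuous.pow
                apply continuous_norm.comp
                exact (Complex.continuous_ofReal.mul continuous_const).sub
                  continuous_const
              have := hcont.tendsto (1:ℝ)
              simp only [Complex.ofReal_one, one_mul] at this
              exact this.mono_left nhdsWithin_le_nhds
            have hnum : Tendsto (fun r : ℝ => (1 - r^2)^2) (𝓝[<] (1:ℝ)) (𝓝 0) := by
              have hcont : Continuous fun r : ℝ => ((1:ℝ) - r^2)^2 := by continuity
              have := hcont.tendsto (1:ℝ)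
              norm_num at this
              exact this.mono_left nhdsWithin_le_nhds
            have hdenne : ‖(ζ k - ζ j)‖^2 ≠ 0 :=
              (pow_pos (norm_pos_iff.mpr hjk) 2).ne'
            have := (hnum.div hden hdenne).const_mul (c j)
            simpa using this
          have h3 := h1.sub h2
          simp only [Finset.sum_const_zero, sub_zero] at h3
          rw [hφ]
          have h4 : c k * ((1:ℝ)+1)^2 = 4 * c k := by ring
          rw [h4] at h3
          exact h3
        have hev1 : ∀ᶠ r : ℝ in 𝓝[<] (1:ℝ), 4 * c k - ε < φ r :=
          hL.eventually_const_lt (by linarith)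
        have hev2 : ∀ᶠ r : ℝ in 𝓝[<] (1:ℝ),
            φ r ≤ (1 - r^2) * (G ((r:ℂ) * ζ k)).re := by
          filter_upwards [hIoo] with r hr
          have habsw : ‖((r:ℂ) * ζ k)‖ = r := by
            rw [norm_mul, Complex.norm_real, Real.norm_eq_abs, hcirc k, mul_one, abs_of_pos hr.1]
          have hw : ((r:ℂ) * ζ k) ∈ unitDisc := by
            rw [CP.mem_disc, habsw]; exact hr.2
          have hjk := hjulia k ((r:ℂ) * ζ k) hw
          have hr2 : 0 < 1 - r^2 := by nlinarith [hr.1, hr.2]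
          have hPk : unitDiscPoissonKernel (ζ k) ((r:ℂ) * ζ k) = (1 - r^2) / (1-r)^2 := by
            rw [unitDiscPoissonKernel, habsw, CP.abs_radial_sub (hcirc k) hr]
          have hPj : ∀ j, unitDiscPoissonKernel (ζ j) ((r:ℂ) * ζ k)
              = (1 - r^2) / ‖((r:ℂ) * ζ k - ζ j)‖^2 := by
            intro j
            rw [unitDiscPoissonKernel, habsw]
          rw [hGre _ hw, mul_sub, Finset.mul_sum, hφ]
          have e1 : c k * (1+r)^2 ≤ (1 - r^2) * (F ((r:ℂ) * ζ k)).re := by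
            have := mul_le_mul_of_nonneg_left hjk hr2.le
            rw [hPk] at this
            have heq : (1 - r^2) * (c k * ((1 - r^2) / (1-r)^2)) = c k * (1+r)^2 := by
              have h1r : (1:ℝ) - r ≠ 0 := by linarith [hr.2]
              field_simp
              ring
            linarith [heq ▸ this]
          have e2 : ∀ j ∈ S, (1 - r^2) * (c j * unitDiscPoissonKernel (ζ j) ((r:ℂ) * ζ k))
              = c j * ((1 - r^2)^2 / ‖((r:ℂ) * ζ k - ζ j)‖^2) := by
            intro j _
            rw [hPj j]
            ring
          have : ∑ j ∈ S, (1 - r ^ 2) * (c j * unitDiscPoissonKernel (ζ j) ((r:ℂ) * ζ k))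
              = ∑ j ∈ S, c j * ((1 - r^2)^2 / ‖((r:ℂ) * ζ k - ζ j)‖^2) :=
            Finset.sum_congr rfl e2
          rw [this]
          linarith [e1]
        filter_upwards [hev1, hev2] with r h1 h2
        linarith
      have hjul := CP.juliaA hGd hGnn (hcirc k) hfreq hz
      rw [hGre z hz] at hjul
      rw [Finset.sum_insert hk]
      linarith
  have h0 : (0:ℂ) ∈ unitDisc := by
    have : ‖(0:ℂ)‖ < 1 := by simp
    exact this
  have hfin := main Finset.univ 0 h0
  have hP0 : ∀ j, unitDiscPoissonKernel (ζ j) 0 = 1 := by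
    intro j
    rw [unitDiscPoissonKernel]
    simp [hcirc j]
  have hsum : ∑ j ∈ Finset.univ, c j * unitDiscPoissonKernel (ζ j) 0
      = ∑ j : Fin n, 1 / ‖(d j)‖ := by
    apply Finset.sum_congr rfl
    intro j _
    rw [hP0 j, mul_one]
  rw [hsum] at hfin
  exact hfin
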